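/- Let f : ℂ → ℂ be entire, let t, P ∈ ℝ, and let ν be a Borel measure on ℂ such that for every measurable set A ⊆ ℂ on which f is injective and on which deriv f is nowhere zero, ν(f(A)) = ∫⁻_{z ∈ A} exp(P + t·log ‖deriv f z‖) dν(z) (lower Lebesgue integral, with the integrand coerced to extended nonnegative reals). Let n ≥ 1 be an integer, U ⊆ ℂ a measurable set, x ∈ U, and K ≥ 1 such that: f^[n] is injective on U; deriv f (f^[j](z)) ≠ 0 for every z ∈ U and every j < n; and K⁻¹·‖deriv (f^[n]) x‖ ≤ ‖deriv (f^[n]) z‖ ≤ K·‖deriv (f^[n]) x‖ for every z ∈ U. Then ν(U) ≤ K^{|t|}·exp(−n·P)·‖deriv (f^[n]) x‖^{−t} · ν(f^[n](U)). -/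

import Mathlib

/-!
Conformality says that `f` multiplies `ν` locally by the density `e^ψ`. Pushing forward
along `f^[n]` one step at a time, on the univalent non-critical pieces `f^[j] '' U`, gives
`ν (f^[n] '' U) = ∫⁻_U ∏_{j<n} e^{ψ(f^[j] z)} dν`, and by the chain rule this density is
`e^{nP} ‖(f^[n])' z‖^t`. Bounded distortion bounds it below on `U` by
`K^{-|t|} e^{nP} ‖(f^[n])' x‖^t`, which integrates to the estimate.
-/

open MeasureTheory ENNReal Set Function

theorem MeasureTheory.Measure.map_withDensity_comp {α β : Type*} [MeasurableSpace α]
    [MeasurableSpace β] (μ : Measure α) {φ : α → β} {g : β → ℝ≥0∞} (hφ : Measurable φ)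
    (hg : Measurable g) : (μ.withDensity (g ∘ φ)).map φ = (μ.map φ).withDensity g := by
  ext B hB
  rw [Measure.map_apply hφ hB, withDensity_apply _ hB, withDensity_apply _ (hφ hB),
    setLIntegral_map hB hg hφ, comp_def]

def IsConformalOn {α : Type*} [MeasurableSpace α] (ν : Measure α) (f : α → α)
    (ρ : α → ℝ≥0∞) (S : Set α) : Prop :=
  ∀ A, MeasurableSet A → A ⊆ S → InjOn f A → ν (f '' A) = ∫⁻ z in A, ρ z ∂ν

namespace IsConformalOn

variable {α : Type*} [MeasurableSpace α] {ν : Measure α} {f : α → α} {ρ : α → ℝ≥0∞}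
  {S A : Set α}

theorem map_withDensity_restrict (h : IsConformalOn ν f ρ S) (hf : Measurable f)
    (hA : MeasurableSet A) (hAS : A ⊆ S) (hinj : InjOn f A) :
    ((ν.restrict A).withDensity ρ).map f = ν.restrict (f '' A) := by
  ext B hB
  rw [Measure.map_apply hf hB, withDensity_apply _ (hf hB), Measure.restrict_restrict (hf hB),
    Measure.restrict_apply hB, ← image_preimage_inter,
    h _ ((hf hB).inter hA) (inter_subset_right.trans hAS) (hinj.mono inter_subset_right)]

variable [TopologicalSpace α] [PolishSpace α] [BorelSpace α]

theorem map_iterate_withDensity_restrict (h : IsConformalOn ν f ρ S) (hf : Continuous f)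
    (hρ : Measurable ρ) (hA : MeasurableSet A) (n : ℕ) (hinj : InjOn f^[n] A)
    (hAS : ∀ z ∈ A, ∀ j < n, f^[j] z ∈ S) :
    ((ν.restrict A).withDensity fun z ↦ ∏ j ∈ Finset.range n, ρ (f^[j] z)).map f^[n] =
      ν.restrict (f^[n] '' A) := by
  induction n with
  | zero => simp
  | succ m ih =>
    rw [iterate_succ'] at hinj ⊢
    have hfm : Continuous f^[m] := hf.iterate m
    have hdensity : (fun z ↦ ∏ j ∈ Finset.range (m + 1), ρ (f^[j] z)) =
        (fun z ↦ ∏ j ∈ Finset.range m, ρ (f^[j] z)) * (ρ ∘ f^[m]) := by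
      ext z
      simp only [Finset.prod_range_succ, Pi.mul_apply, comp_apply]
    have himage : MeasurableSet (f^[m] '' A) :=
      hA.image_of_continuousOn_injOn hfm.continuousOn hinj.of_comp
    rw [hdensity, withDensity_mul _ (by fun_prop) (hρ.comp hfm.measurable),
      ← Measure.map_map hf.measurable hfm.measurable,
      Measure.map_withDensity_comp _ hfm.measurable hρ,
      ih hinj.of_comp fun z hz j hj ↦ hAS z hz j (Nat.lt_succ_of_lt hj),
      h.map_withDensity_restrict hf.measurable himage
        (image_subset_iff.2 fun z hz ↦ hAS z hz m m.lt_succ_self) hinj.image_of_comp,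
      image_comp]

theorem iterate (h : IsConformalOn ν f ρ S) (hf : Continuous f) (hρ : Measurable ρ) (n : ℕ) :
    IsConformalOn ν f^[n] (fun z ↦ ∏ j ∈ Finset.range n, ρ (f^[j] z))
      {z | ∀ j < n, f^[j] z ∈ S} := fun A hA hAS hinj ↦ by
  have := congrArg (· univ) (h.map_iterate_withDensity_restrict hf hρ hA n hinj hAS)
  simpa [Measure.map_apply (hf.iterate n).measurable MeasurableSet.univ] using this.symm

end IsConformalOn
section Iterate

variable {𝕜 : Type*} [NontriviallyNormedField 𝕜] {f : 𝕜 → 𝕜}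

theorem deriv_iterate_eq_prod (hf : Differentiable 𝕜 f) (n : ℕ) (z : 𝕜) :
    deriv f^[n] z = ∏ j ∈ Finset.range n, deriv f (f^[j] z) := by
  induction n with
  | zero => simp
  | succ m ih =>
    rw [iterate_succ', deriv_comp z (hf _) ((hf.iterate m) z), ih, Finset.prod_range_succ,
      mul_comm]

theorem deriv_iterate_ne_zero (hf : Differentiable 𝕜 f) {n : ℕ} {z : 𝕜}
    (hz : ∀ j < n, deriv f (f^[j] z) ≠ 0) : deriv f^[n] z ≠ 0 := by
  rw [deriv_iterate_eq_prod hf]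
  exact Finset.prod_ne_zero_iff.2 fun j hj ↦ hz j (Finset.mem_range.1 hj)

theorem prod_ofReal_exp_add_mul_log_norm_deriv_iterate (hf : Differentiable 𝕜 f) (P t : ℝ)
    {n : ℕ} {z : 𝕜} (hz : ∀ j < n, deriv f (f^[j] z) ≠ 0) :
    ∏ j ∈ Finset.range n, ENNReal.ofReal (Real.exp (P + t * Real.log ‖deriv f (f^[j] z)‖)) =
      ENNReal.ofReal (Real.exp (n * P) * ‖deriv f^[n] z‖ ^ t) := by
  have hlog : ∑ j ∈ Finset.range n, Real.log ‖deriv f (f^[j] z)‖ =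
      Real.log ‖deriv f^[n] z‖ := by
    rw [deriv_iterate_eq_prod hf, norm_prod,
      Real.log_prod fun j hj ↦ norm_ne_zero_iff.2 (hz j (Finset.mem_range.1 hj))]
  rw [← ENNReal.ofReal_prod_of_nonneg fun j _ ↦ (Real.exp_pos _).le, ← Real.exp_sum,
    Finset.sum_add_distrib, ← Finset.mul_sum, hlog, Real.exp_add,
    Real.rpow_def_of_pos (norm_pos_iff.2 (deriv_iterate_ne_zero hf hz)), mul_comm t]
  simp

end Iterate

theorem Real.rpow_le_rpow_abs_mul_rpow {a b K : ℝ} (ha : 0 < a) (hb : 0 < b)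
    (hlo : K⁻¹ * b ≤ a) (hhi : a ≤ K * b) (t : ℝ) : b ^ t ≤ K ^ |t| * a ^ t := by
  have hK : 0 < K := pos_of_mul_pos_left (ha.trans_le hhi) hb.le
  rcases le_or_gt 0 t with ht | ht
  · have hb_le : b ≤ K * a := by rwa [inv_mul_le_iff₀ hK] at hlo
    calc b ^ t ≤ (K * a) ^ t := Real.rpow_le_rpow hb.le hb_le ht
      _ = K ^ |t| * a ^ t := by rw [abs_of_nonneg ht, Real.mul_rpow hK.le ha.le]
  · have hle_b : K⁻¹ * a ≤ b := by rwa [inv_mul_le_iff₀ hK]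
    calc b ^ t ≤ (K⁻¹ * a) ^ t := Real.rpow_le_rpow_of_nonpos (by positivity) hle_b ht.le
      _ = K ^ |t| * a ^ t := by
        rw [abs_of_neg ht, Real.mul_rpow (by positivity) ha.le, Real.inv_rpow hK.le,
          Real.rpow_neg hK.le]

theorem conformal_measure_pullback_estimate_general
    (f : ℂ → ℂ) (hf : Differentiable ℂ f) (t P : ℝ)
    (ν : Measure ℂ)
    (hconf : ∀ A : Set ℂ, MeasurableSet A → Set.InjOn f A → (∀ z ∈ A, deriv f z ≠ 0) →
      ν (f '' A) = ∫⁻ z in A, ENNReal.ofReal (Real.exp (P + t * Real.log ‖deriv f z‖)) ∂ν)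
    (n : ℕ) (U : Set ℂ) (hU : MeasurableSet U) (x : ℂ) (hx : x ∈ U)
    (K : ℝ)
    (hinj : Set.InjOn (f^[n]) U)
    (hcrit : ∀ z ∈ U, ∀ j < n, deriv f (f^[j] z) ≠ 0)
    (hdist : ∀ z ∈ U, K⁻¹ * ‖deriv (f^[n]) x‖ ≤ ‖deriv (f^[n]) z‖ ∧
      ‖deriv (f^[n]) z‖ ≤ K * ‖deriv (f^[n]) x‖) :
    ν U ≤ ENNReal.ofReal (K ^ |t| * Real.exp (-(n : ℝ) * P) * ‖deriv (f^[n]) x‖ ^ (-t)) *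
      ν (f^[n] '' U) := by
  set b := ‖deriv f^[n] x‖
  set ρ : ℂ → ℝ≥0∞ := fun z ↦ ENNReal.ofReal (Real.exp (P + t * Real.log ‖deriv f z‖))
  have hρ : Measurable ρ := by fun_prop
  have hconfOn : IsConformalOn ν f ρ {z | deriv f z ≠ 0} := fun A hA hAS hinj ↦
    hconf A hA hinj hAS
  have hb : 0 < b := norm_pos_iff.2 (deriv_iterate_ne_zero hf (hcrit x hx))
  have himage : ν (f^[n] '' U) =
      ∫⁻ z in U, ENNReal.ofReal (Real.exp (n * P) * ‖deriv f^[n] z‖ ^ t) ∂ν := by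
    rw [hconfOn.iterate hf.continuous hρ n U hU hcrit hinj]
    exact setLIntegral_congr_fun hU fun z hz ↦
      prod_ofReal_exp_add_mul_log_norm_deriv_iterate hf P t (hcrit z hz)
  calc ν U = ∫⁻ _ in U, 1 ∂ν := (setLIntegral_one U).symm
    _ ≤ ∫⁻ z in U, ENNReal.ofReal (K ^ |t| * Real.exp (-(n : ℝ) * P) * b ^ (-t)) *
          ENNReal.ofReal (Real.exp (n * P) * ‖deriv f^[n] z‖ ^ t) ∂ν := by
      refine setLIntegral_mono' hU fun z hz ↦ ?_
      have ha : 0 < ‖deriv f^[n] z‖ := norm_pos_iff.2 (deriv_iterate_ne_zero hf (hcrit z hz))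
      have hbt := Real.rpow_le_rpow_abs_mul_rpow ha hb (hdist z hz).1 (hdist z hz).2 t
      rw [← ENNReal.ofReal_mul' (by positivity), ← ENNReal.ofReal_one]
      refine ENNReal.ofReal_le_ofReal ?_
      rw [Real.rpow_neg hb.le, neg_mul, Real.exp_neg]
      field_simp
      exact hbt
    _ = _ := by rw [lintegral_const_mul' _ _ ENNReal.ofReal_ne_top, himage]

/-- Pullback estimate for conformal measures on univalent pull-backs with distortion
bounded by `K`: if `ν` is `e^{P + t·log‖f'‖}`-conformal outside the critical set,
`f^[n]` is injective on `U` avoiding critical points, and the derivative of `f^[n]`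
on `U` is comparable to its value at `x ∈ U` up to a factor `K`, then
`ν U ≤ K^{|t|}·e^{-nP}·‖(f^[n])'(x)‖^{-t}·ν (f^[n] '' U)`. -/
theorem conformal_measure_pullback_estimate
    (f : ℂ → ℂ) (hf : Differentiable ℂ f) (t P : ℝ)
    (ν : Measure ℂ)
    (hconf : ∀ A : Set ℂ, MeasurableSet A → Set.InjOn f A → (∀ z ∈ A, deriv f z ≠ 0) →
      ν (f '' A) = ∫⁻ z in A, ENNReal.ofReal (Real.exp (P + t * Real.log ‖deriv f z‖)) ∂ν)
    (n : ℕ) (hn : 1 ≤ n) (U : Set ℂ) (hU : MeasurableSet U) (x : ℂ) (hx : x ∈ U)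
    (K : ℝ) (hK : 1 ≤ K)
    (hinj : Set.InjOn (f^[n]) U)
    (hcrit : ∀ z ∈ U, ∀ j < n, deriv f (f^[j] z) ≠ 0)
    (hdist : ∀ z ∈ U, K⁻¹ * ‖deriv (f^[n]) x‖ ≤ ‖deriv (f^[n]) z‖ ∧
      ‖deriv (f^[n]) z‖ ≤ K * ‖deriv (f^[n]) x‖) :
    ν U ≤ ENNReal.ofReal (K ^ |t| * Real.exp (-(n : ℝ) * P) * ‖deriv (f^[n]) x‖ ^ (-t)) *
      ν (f^[n] '' U) :=
  conformal_measure_pullback_estimate_general f hf t P ν hconf n U hU x hx K hinj hcrit hdist
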